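/- If c = (m, m·G_k, m) is a codeword of L_k^+ and the weight of m is 2i, then the weight of c is 6i; if the weight of m is 2i+1, then the weight of c is k + 2i + 1. -/

import Mathlib

/-!
Over `𝔽₂` we have `G_k = J - I` with `J` the all-ones matrix, so `m G_k = (∑ᵢ mᵢ) 𝟙 - m`, and
`∑ᵢ mᵢ` is the parity of `w(m)`. Hence `m G_k = m` when `w(m)` is even, and otherwise `m G_k` is
the complement `𝟙 - m`, of weight `k - w(m)`.
-/

/-- the k×k matrix over F₂ with 0 on the diagonal and 1 elsewhere -/
def G (k : ℕ) : Matrix (Fin k) (Fin k) (ZMod 2) := fun i j => if i = j then 0 else 1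

section ZModTwo

variable {ι : Type*} [Fintype ι]

lemma ZMod.eq_one_of_ne_zero_two {a : ZMod 2} (ha : a ≠ 0) : a = 1 := by
  fin_cases a
  exacts [absurd rfl ha, rfl]

lemma ZMod.one_sub_ne_zero_iff_two (a : ZMod 2) : 1 - a ≠ 0 ↔ a = 0 := by
  revert a
  decide

lemma sum_eq_hammingNorm (m : ι → ZMod 2) : ∑ i, m i = hammingNorm m := by
  rw [hammingNorm, ← Finset.sum_filter_ne_zero, Finset.card_eq_sum_ones, Nat.cast_sum]
  exact Finset.sum_congr rfl fun i hi =>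
    by rw [ZMod.eq_one_of_ne_zero_two (Finset.mem_filter.1 hi).2, Nat.cast_one]

lemma hammingNorm_one_sub (m : ι → ZMod 2) :
    hammingNorm (1 - m) = Fintype.card ι - hammingNorm m := by
  have hcompl : hammingNorm (1 - m) = (Finset.univ.filter fun i => ¬ m i ≠ 0).card := by
    refine congrArg Finset.card (Finset.filter_congr fun i _ => ?_)
    rw [Pi.sub_apply, Pi.one_apply, not_not]
    exact ZMod.one_sub_ne_zero_iff_two (m i)
  rw [hcompl, ← Finset.card_univ, ← Finset.card_filter_add_card_filter_not (s := Finset.univ)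
    (fun i => m i ≠ 0), hammingNorm]
  omega

end ZModTwo

lemma G_eq_allOnes_sub_one (k : ℕ) : G k = Matrix.of (fun _ _ => 1) - 1 := by
  ext i j
  by_cases h : i = j <;> simp [G, h]

lemma vecMul_G {k : ℕ} (m : Fin k → ZMod 2) :
    Matrix.vecMul m (G k) = (fun _ => (hammingNorm m : ZMod 2)) - m := by
  rw [G_eq_allOnes_sub_one, Matrix.vecMul_sub, Matrix.vecMul_one]
  ext j
  simp [Matrix.vecMul, dotProduct, sum_eq_hammingNorm]

lemma vecMul_G_of_even {k : ℕ} {m : Fin k → ZMod 2} (h : Even (hammingNorm m)) :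
    Matrix.vecMul m (G k) = m := by
  rw [vecMul_G, ZMod.natCast_eq_zero_iff_even.2 h]
  ext j
  simp [ZMod.neg_eq_self_mod_two]

lemma vecMul_G_of_odd {k : ℕ} {m : Fin k → ZMod 2} (h : Odd (hammingNorm m)) :
    Matrix.vecMul m (G k) = 1 - m := by
  rw [vecMul_G, ZMod.natCast_eq_one_iff_odd.2 h]
  rfl

theorem stmt14 (k : ℕ) (m : Fin k → ZMod 2) :
    (∀ i : ℕ, hammingNorm m = 2 * i →
      hammingNorm m + hammingNorm (Matrix.vecMul m (G k)) + hammingNorm m = 6 * i) ∧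
    (∀ i : ℕ, hammingNorm m = 2 * i + 1 →
      hammingNorm m + hammingNorm (Matrix.vecMul m (G k)) + hammingNorm m
        = k + 2 * i + 1) := by
  constructor
  · intro i hi
    rw [vecMul_G_of_even ⟨i, by omega⟩, hi]
    ring
  · intro i hi
    have hle : hammingNorm m ≤ k := by simpa using hammingNorm_le_card_fintype (x := m)
    rw [vecMul_G_of_odd ⟨i, hi⟩, hammingNorm_one_sub, Fintype.card_fin]
    omega
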